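/- arXiv:2504.06951 — 4 statements merged into one kernel-verified Lean document; each statement's English description precedes it below -/
import Mathlib

section
/- Define the measure ν_N on subsets E of [0,1] by ν_N(E) = 2^{-N} · Σ_{J ∈ J_N, 2J/N ∈ E} C(J,N)(2J+1), where C(J,N) = (2J+1)/(N+1)·binom(N+1, N/2+J+1). Then for every ε > 0 and every measurable E ⊆ [0,1] with E ∩ [0,ε] = ∅, one has ν_N(E) ≤ 2(N+1)²·exp(-(Nε+1)²/(6(N+1))). -/
open Finset Real
open scoped Classical


lemma choose_mul_exp_le (n j : ℕ) (hj : j ≤ n) (lam : ℝ) :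
    (n.choose j : ℝ) * Real.exp (lam * ((j : ℝ) - n / 2)) ≤
      (Real.exp (lam / 2) + Real.exp (-(lam / 2))) ^ n := by
  have hbin := add_pow (Real.exp (lam / 2)) (Real.exp (-(lam / 2))) n
  rw [hbin]
  have hterm : ∀ i ∈ Finset.range (n+1), (0:ℝ) ≤
      Real.exp (lam/2) ^ i * Real.exp (-(lam/2)) ^ (n - i) * (n.choose i : ℝ) := by
    intro i _; positivity
  have hmem : j ∈ Finset.range (n+1) := Finset.mem_range.mpr (Nat.lt_succ_of_le hj)
  have := Finset.single_le_sum hterm hmem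
  refine le_trans (le_of_eq ?_) this
  rw [← Real.exp_nat_mul, ← Real.exp_nat_mul, ← Real.exp_add]
  rw [mul_comm]
  congr 1
  have : ((n - j : ℕ) : ℝ) = (n : ℝ) - j := by
    have := Nat.cast_sub hj (R := ℝ); linarith
  rw [this]; ring

lemma choose_le_two_pow_exp (n j : ℕ) (hn : 0 < n) (hj : j ≤ n) :
    (n.choose j : ℝ) ≤ 2 ^ n * Real.exp (-2 * ((j : ℝ) - n / 2) ^ 2 / n) := by
  set d : ℝ := (j : ℝ) - n / 2 with hd
  set lam : ℝ := 4 * d / n with hlam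
  have hn' : (0:ℝ) < n := by exact_mod_cast hn
  have h1 := choose_mul_exp_le n j hj lam
  have h2 : Real.exp (lam / 2) + Real.exp (-(lam / 2)) ≤ 2 * Real.exp (lam ^ 2 / 8) := by
    have := Real.cosh_le_exp_half_sq (lam / 2)
    rw [Real.cosh_eq] at this
    have h : (lam / 2) ^ 2 / 2 = lam ^ 2 / 8 := by ring
    rw [h] at this; linarith
  have h3 : (Real.exp (lam / 2) + Real.exp (-(lam / 2))) ^ n ≤
      (2 * Real.exp (lam ^ 2 / 8)) ^ n := by
    apply pow_le_pow_left₀ (by positivity) h2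
  have h4 : (2 * Real.exp (lam ^ 2 / 8)) ^ n = 2 ^ n * Real.exp (n * (lam ^ 2 / 8)) := by
    rw [mul_pow, ← Real.exp_nat_mul]
  have key : (n.choose j : ℝ) * Real.exp (lam * d) ≤ 2 ^ n * Real.exp (n * (lam ^ 2 / 8)) := by
    calc (n.choose j : ℝ) * Real.exp (lam * d) ≤ _ := h1
      _ ≤ _ := h3
      _ = _ := h4
  have hexp : (n:ℝ) * (lam ^ 2 / 8) - lam * d = -2 * d ^ 2 / n := by
    rw [hlam]; field_simp; ring
  have := mul_le_mul_of_nonneg_right key (le_of_lt (Real.exp_pos (-(lam * d))))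
  rw [mul_assoc, ← Real.exp_add, mul_assoc, ← Real.exp_add] at this
  simp only [add_neg_cancel, Real.exp_zero, mul_one] at this
  rwa [show (n:ℝ) * (lam ^ 2 / 8) + -(lam * d) = -2 * d ^ 2 / n by linarith [hexp]] at this
/-- Bound on the measures `ν_N`: if `E ⊆ [0,1]` avoids `[0,ε]`, then
`ν_N(E) ≤ 2(N+1)² exp(-(Nε+1)²/(6(N+1)))`.  Here `ν_N(E)` is written via `k = 2J`. -/
theorem nu_N_tail_bound (N : ℕ) (hN : 1 ≤ N) (ε : ℝ) (hε : 0 < ε)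
    (E : Set ℝ) (hE : E ⊆ Set.Icc 0 1) (hdisj : E ∩ Set.Icc 0 ε = ∅) :
    (∑ k ∈ Finset.range (N + 1),
        if k % 2 = N % 2 ∧ (k : ℝ) / N ∈ E then
          ((k + 1 : ℝ)) ^ 2 / (N + 1) * (Nat.choose (N + 1) ((N + k) / 2 + 1) : ℝ)
        else 0) / 2 ^ N
    ≤ 2 * ((N : ℝ) + 1) ^ 2 * Real.exp (-((N : ℝ) * ε + 1) ^ 2 / (6 * ((N : ℝ) + 1))) := by
  have hN' : (0:ℝ) < N := by exact_mod_cast hN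
  set Ex : ℝ := Real.exp (-((N : ℝ) * ε + 1) ^ 2 / (6 * ((N : ℝ) + 1))) with hEx
  set B : ℝ := ((N:ℝ) + 1) * (2 ^ (N + 1) * Ex) with hB
  have hExpos : 0 < Ex := Real.exp_pos _
  have hBpos : 0 < B := by positivity
  have hbound : ∀ k ∈ Finset.range (N + 1),
      (if k % 2 = N % 2 ∧ (k : ℝ) / N ∈ E then
          ((k + 1 : ℝ)) ^ 2 / (N + 1) * (Nat.choose (N + 1) ((N + k) / 2 + 1) : ℝ)
        else 0) ≤ B := by
    intro k hk
    rw [Finset.mem_range] at hk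
    split_ifs with h
    · obtain ⟨hpar, hmem⟩ := h
      have hgt : ε < (k : ℝ) / N := by
        by_contra hle
        push_neg at hle
        have h0 : (0:ℝ) ≤ (k:ℝ)/N := by positivity
        have : (k:ℝ)/N ∈ E ∩ Set.Icc 0 ε := ⟨hmem, h0, hle⟩
        rw [hdisj] at this; exact this
      have hkgt : (N:ℝ) * ε < k := by
        rw [lt_div_iff₀ hN'] at hgt; linarith
      -- cast of (N+k)/2
      have hdvd : 2 * ((N + k) / 2) = N + k := by omega
      have hcast : (((N + k) / 2 : ℕ) : ℝ) = ((N:ℝ) + k) / 2 := by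
        have : ((2 * ((N + k) / 2) : ℕ) : ℝ) = ((N:ℝ) + k) := by rw [hdvd]; push_cast; ring
        push_cast at this; linarith
      have hjle : (N + k) / 2 + 1 ≤ N + 1 := by omega
      have hch := choose_le_two_pow_exp (N + 1) ((N + k) / 2 + 1) (by omega) hjle
      have harg : -2 * ((((N + k) / 2 + 1 : ℕ) : ℝ) - ((N + 1 : ℕ) : ℝ) / 2) ^ 2 / ((N + 1 : ℕ) : ℝ)
          = -((k:ℝ) + 1) ^ 2 / (2 * ((N:ℝ) + 1)) := by
        push_cast [hcast]
        have hNpos : (0:ℝ) < (N:ℝ) + 1 := by linarith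
        field_simp
        ring
      rw [harg] at hch
      push_cast at hch
      have hexp_le : Real.exp (-((k:ℝ) + 1) ^ 2 / (2 * ((N:ℝ) + 1))) ≤ Ex := by
        rw [hEx]
        apply Real.exp_le_exp.mpr
        rw [div_le_div_iff₀ (by linarith) (by linarith)]
        have hsq : ((N:ℝ) * ε + 1) ^ 2 ≤ ((k:ℝ) + 1) ^ 2 := pow_le_pow_left₀ (by positivity) (by linarith) 2
        nlinarith [hsq, sq_nonneg ((k:ℝ) + 1), hN']
      have hch2 : (Nat.choose (N + 1) ((N + k) / 2 + 1) : ℝ) ≤ 2 ^ (N + 1) * Ex := by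
        calc (Nat.choose (N + 1) ((N + k) / 2 + 1) : ℝ) ≤ _ := hch
          _ ≤ 2 ^ (N + 1) * Ex := by
            apply mul_le_mul_of_nonneg_left hexp_le (by positivity)
      have hfac : ((k:ℝ) + 1) ^ 2 / ((N:ℝ) + 1) ≤ (N:ℝ) + 1 := by
        rw [div_le_iff₀ (by linarith)]
        have : (k:ℝ) ≤ N := by exact_mod_cast Nat.lt_succ_iff.mp hk
        nlinarith
      calc ((k:ℝ) + 1) ^ 2 / ((N:ℝ) + 1) * (Nat.choose (N + 1) ((N + k) / 2 + 1) : ℝ)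
          ≤ ((N:ℝ) + 1) * (2 ^ (N + 1) * Ex) := by
            apply mul_le_mul hfac hch2 (by positivity) (by linarith)
        _ = B := by rw [hB]
    · exact le_of_lt hBpos
  have hsum : (∑ k ∈ Finset.range (N + 1),
        if k % 2 = N % 2 ∧ (k : ℝ) / N ∈ E then
          ((k + 1 : ℝ)) ^ 2 / (N + 1) * (Nat.choose (N + 1) ((N + k) / 2 + 1) : ℝ)
        else 0) ≤ ((N:ℝ) + 1) * B := by
    have := Finset.sum_le_card_nsmul (Finset.range (N + 1)) _ B hbound
    rw [Finset.card_range, nsmul_eq_mul] at this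
    push_cast at this
    exact this
  rw [div_le_iff₀ (by positivity : (0:ℝ) < 2 ^ N)]
  calc _ ≤ ((N:ℝ) + 1) * B := hsum
    _ = 2 * ((N:ℝ) + 1) ^ 2 * Ex * 2 ^ N := by
        rw [hB, pow_succ]; ring
end

section
/- The sequence of probability measures (ν_N) on [0,1], defined by ν_N(E) = 2^{-N} Σ_{J: 2J/N ∈ E} C(J,N)(2J+1), converges weakly (indeed setwise) to the Dirac measure δ_0 concentrated at 0 as N → ∞. -/
set_option maxHeartbeats 1000000

open Finset Filter Real


lemma pascal_sum (n : ℕ) (f : ℕ → ℝ) :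
    ∑ m ∈ Finset.range (n + 2), f m * ((n + 1).choose m : ℝ)
      = ∑ m ∈ Finset.range (n + 1), (f m + f (m + 1)) * (n.choose m : ℝ) := by
  rw [Finset.sum_range_succ' (fun m => f m * ((n + 1).choose m : ℝ)) (n + 1)]
  have h1 : ∀ m ∈ Finset.range (n+1), f (m+1) * ((n+1).choose (m+1) : ℝ)
      = f (m+1) * (n.choose m : ℝ) + f (m+1) * (n.choose (m+1) : ℝ) := by
    intro m _
    rw [Nat.choose_succ_succ]
    push_cast
    ring
  rw [Finset.sum_congr rfl h1, Finset.sum_add_distrib]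
  have h2 : ∑ m ∈ Finset.range (n+1), f (m+1) * (n.choose (m+1) : ℝ) + f 0 * ((n+1).choose 0 : ℝ)
      = ∑ m ∈ Finset.range (n+1), f m * (n.choose m : ℝ) := by
    rw [show ((n+1).choose 0 : ℝ) = (n.choose 0 : ℝ) by simp]
    rw [← Finset.sum_range_succ' (fun m => f m * (n.choose m : ℝ)) (n+1)]
    rw [Finset.sum_range_succ]
    simp [Nat.choose_succ_self]
  rw [add_assoc, h2]
  rw [← Finset.sum_add_distrib]
  apply Finset.sum_congr rfl
  intro m _
  ring

lemma sum_choose_real (n : ℕ) : ∑ m ∈ Finset.range (n+1), (n.choose m : ℝ) = 2 ^ n := by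
  rw [← Nat.cast_sum]
  rw [Nat.sum_range_choose]
  push_cast; ring

lemma sum_sq (n : ℕ) :
    ∑ m ∈ Finset.range (n + 1), ((2 * m : ℝ) - n) ^ 2 * (n.choose m : ℝ) = n * 2 ^ n := by
  induction n with
  | zero => simp
  | succ n ih =>
    have := pascal_sum n (fun m => ((2 * m : ℝ) - (n+1)) ^ 2)
    push_cast at this ⊢
    rw [this]
    have h : ∀ m ∈ Finset.range (n+1),
        (((2 * m : ℝ) - (n+1)) ^ 2 + ((2 * (m+1) : ℝ) - (n+1)) ^ 2) * (n.choose m : ℝ)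
        = 2 * (((2 * m : ℝ) - n) ^ 2 * (n.choose m : ℝ)) + 2 * (n.choose m : ℝ) := by
      intro m _; ring
    rw [Finset.sum_congr rfl h, Finset.sum_add_distrib, ← Finset.mul_sum, ← Finset.mul_sum,
      ih, sum_choose_real]
    ring

lemma sum_quad (n : ℕ) :
    ∑ m ∈ Finset.range (n + 1), ((2 * m : ℝ) - n) ^ 4 * (n.choose m : ℝ)
      = (3 * n ^ 2 - 2 * n) * 2 ^ n := by
  induction n with
  | zero => simp
  | succ n ih =>
    have := pascal_sum n (fun m => ((2 * m : ℝ) - (n+1)) ^ 4)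
    push_cast at this ⊢
    rw [this]
    have h : ∀ m ∈ Finset.range (n+1),
        (((2 * m : ℝ) - (n+1)) ^ 4 + ((2 * (m+1) : ℝ) - (n+1)) ^ 4) * (n.choose m : ℝ)
        = 2 * (((2 * m : ℝ) - n) ^ 4 * (n.choose m : ℝ))
          + 12 * (((2 * m : ℝ) - n) ^ 2 * (n.choose m : ℝ)) + 2 * (n.choose m : ℝ) := by
      intro m _; ring
    rw [Finset.sum_congr rfl h, Finset.sum_add_distrib, Finset.sum_add_distrib,
      ← Finset.mul_sum, ← Finset.mul_sum, ← Finset.mul_sum, ih, sum_sq, sum_choose_real]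
    ring

lemma sum_sq_half (n : ℕ) :
    2 * ∑ m ∈ Finset.range (n + 1),
        (if n < 2 * m then ((2 * m : ℝ) - n) ^ 2 * (n.choose m : ℝ) else 0)
      = n * 2 ^ n := by
  have key : ∑ m ∈ Finset.range (n + 1),
        (if 2 * m ≤ n then ((2 * m : ℝ) - n) ^ 2 * (n.choose m : ℝ) else 0)
      = ∑ m ∈ Finset.range (n + 1),
        (if n < 2 * m then ((2 * m : ℝ) - n) ^ 2 * (n.choose m : ℝ) else 0) := by
    apply Finset.sum_nbij' (fun m => n - m) (fun m => n - m)
    · intro a ha; simp only [Finset.mem_range] at *; omega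
    · intro a ha; simp only [Finset.mem_range] at *; omega
    · intro a ha; simp only [Finset.mem_range] at *; omega
    · intro a ha; simp only [Finset.mem_range] at *; omega
    · intro a ha
      simp only [Finset.mem_range] at ha
      by_cases h : 2 * a ≤ n
      · rw [if_pos h]
        rcases eq_or_lt_of_le h with h' | h'
        · rw [if_neg (by omega)]
          have : ((2 * a : ℝ) - n) = 0 := by
            have : (2 * a : ℕ) = n := h'
            rw [← this]; push_cast; ring
          rw [this]; ring
        · rw [if_pos (by omega)]
          rw [Nat.choose_symm (by omega : a ≤ n)]
          rw [Nat.cast_sub (by omega : a ≤ n)]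
          ring
      · rw [if_neg h, if_neg (by omega)]
  have split : ∑ m ∈ Finset.range (n + 1), ((2 * m : ℝ) - n) ^ 2 * (n.choose m : ℝ)
      = ∑ m ∈ Finset.range (n + 1),
          (if 2 * m ≤ n then ((2 * m : ℝ) - n) ^ 2 * (n.choose m : ℝ) else 0)
        + ∑ m ∈ Finset.range (n + 1),
          (if n < 2 * m then ((2 * m : ℝ) - n) ^ 2 * (n.choose m : ℝ) else 0) := by
    rw [← Finset.sum_add_distrib]
    apply Finset.sum_congr rfl
    intro m _
    by_cases h : 2 * m ≤ n
    · rw [if_pos h, if_neg (by omega)]; ring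
    · rw [if_neg h, if_pos (by omega)]; ring
  have := sum_sq n
  rw [split, key] at this
  linarith


lemma reindex (N : ℕ) (g : ℕ → ℝ) :
    ∑ k ∈ Finset.range (N + 1), (if k % 2 = N % 2 then g k else 0)
      = ∑ m ∈ Finset.range (N + 2), (if N + 1 < 2 * m then g (2 * m - (N + 2)) else 0) := by
  rw [← Finset.sum_filter, ← Finset.sum_filter]
  apply Finset.sum_nbij' (fun k => (N + k) / 2 + 1) (fun m => 2 * m - (N + 2))
  · intro a ha; simp only [Finset.mem_filter, Finset.mem_range] at *; omega
  · intro a ha; simp only [Finset.mem_filter, Finset.mem_range] at *; omega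
  · intro a ha; simp only [Finset.mem_filter, Finset.mem_range] at ha; omega
  · intro a ha; simp only [Finset.mem_filter, Finset.mem_range] at ha; omega
  · intro a ha
    simp only [Finset.mem_filter, Finset.mem_range] at ha
    congr 1
    omega

lemma main_est (F : ℝ → ℝ) (N : ℕ) (hN : 1 ≤ N) (B δ η : ℝ) (hB0 : 0 ≤ B)
    (hB : ∀ x ∈ Set.Icc (0:ℝ) 1, |F x| ≤ B) (hδ0 : 0 < δ) (hη : 0 ≤ η)
    (hδ : ∀ x : ℝ, |x - 0| < δ → |F x - F 0| ≤ η) :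
    |(∑ k ∈ Finset.range (N + 1),
          if k % 2 = N % 2 then
            ((k + 1 : ℝ)) ^ 2 / (N + 1) * (Nat.choose (N + 1) ((N + k) / 2 + 1) : ℝ)
              * F ((k : ℝ) / N)
          else 0) / 2 ^ N - F 0|
      ≤ η + 24 * B / (δ ^ 2 * N) := by
  have hN1 : (1:ℝ) ≤ N := by exact_mod_cast hN
  set w : ℕ → ℝ := fun m =>
    (if N + 1 < 2 * m then ((2 * m : ℝ) - (N + 1)) ^ 2 * ((N + 1).choose m : ℝ) else 0)
      / ((N + 1) * 2 ^ N) with hw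
  set x : ℕ → ℝ := fun m => ((2 * m : ℝ) - (N + 2)) / N with hx
  have hpow : (0:ℝ) < (N + 1) * 2 ^ N := by positivity
  have w_nonneg : ∀ m, 0 ≤ w m := by
    intro m
    apply div_nonneg _ (le_of_lt hpow)
    split
    · positivity
    · exact le_refl 0
  -- total mass
  have w_sum : ∑ m ∈ Finset.range (N + 2), w m = 1 := by
    have h := sum_sq_half (N + 1)
    push_cast at h
    rw [hw]
    rw [← Finset.sum_div]
    rw [div_eq_one_iff_eq (ne_of_gt hpow)]
    have : ∑ m ∈ Finset.range (N + 2),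
        (if N + 1 < 2 * m then ((2 * m : ℝ) - (N + 1)) ^ 2 * ((N + 1).choose m : ℝ) else 0)
        = ((N:ℝ) + 1) * 2 ^ (N + 1) / 2 := by
      linarith [h]
    rw [this]; ring
  -- sum equality
  have S_eq : (∑ k ∈ Finset.range (N + 1),
        if k % 2 = N % 2 then
          ((k + 1 : ℝ)) ^ 2 / (N + 1) * (Nat.choose (N + 1) ((N + k) / 2 + 1) : ℝ)
            * F ((k : ℝ) / N)
        else 0) / 2 ^ N
      = ∑ m ∈ Finset.range (N + 2), w m * F (x m) := by
    rw [reindex N (fun k => ((k + 1 : ℝ)) ^ 2 / (N + 1)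
        * (Nat.choose (N + 1) ((N + k) / 2 + 1) : ℝ) * F ((k : ℝ) / N))]
    rw [Finset.sum_div]
    apply Finset.sum_congr rfl
    intro m hm
    simp only [Finset.mem_range] at hm
    simp only [hw, hx]
    by_cases h : N + 1 < 2 * m
    · simp only [if_pos h]
      have hc : (N + (2 * m - (N + 2))) / 2 + 1 = m := by omega
      have hk : ((2 * m - (N + 2) : ℕ) : ℝ) = 2 * (m : ℝ) - ((N : ℝ) + 2) := by
        have : N + 2 ≤ 2 * m := by omega
        push_cast [Nat.cast_sub this]
        ring
      rw [hc, hk]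
      rw [show (2 * (m:ℝ) - ((N:ℝ) + 2) + 1) = 2 * (m:ℝ) - ((N:ℝ) + 1) from by ring]
      generalize F ((2 * (m : ℝ) - ((N : ℝ) + 2)) / (N : ℝ)) = y
      have hN0 : ((N:ℝ)) ≠ 0 := by positivity
      have h1 : ((N:ℝ) + 1) ≠ 0 := by positivity
      have h2 : ((2:ℝ)) ^ N ≠ 0 := by positivity
      field_simp
    · simp only [if_neg h]
      simp
  rw [S_eq]
  have diff_eq : ∑ m ∈ Finset.range (N + 2), w m * F (x m) - F 0
      = ∑ m ∈ Finset.range (N + 2), w m * (F (x m) - F 0) := by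
    rw [Finset.sum_congr rfl (fun m _ => by ring : ∀ m ∈ Finset.range (N+2),
      w m * (F (x m) - F 0) = w m * F (x m) - w m * F 0)]
    rw [Finset.sum_sub_distrib, ← Finset.sum_mul, w_sum]
    ring
  rw [diff_eq]
  calc |∑ m ∈ Finset.range (N + 2), w m * (F (x m) - F 0)|
      ≤ ∑ m ∈ Finset.range (N + 2), |w m * (F (x m) - F 0)| := Finset.abs_sum_le_sum_abs _ _
    _ ≤ ∑ m ∈ Finset.range (N + 2), (η * w m + (2 * B / δ ^ 2) * (w m * (x m) ^ 2)) := by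
        apply Finset.sum_le_sum
        intro m hm
        simp only [Finset.mem_range] at hm
        rw [abs_mul, abs_of_nonneg (w_nonneg m)]
        by_cases h : N + 1 < 2 * m
        · have hw_pos : 0 ≤ w m := w_nonneg m
          have hx01 : 0 ≤ x m ∧ x m ≤ 1 := by
            constructor
            · rw [hx]
              apply div_nonneg _ (by positivity)
              have : (N:ℝ) + 2 ≤ 2 * m := by exact_mod_cast (by omega : N + 2 ≤ 2 * m)
              linarith
            · rw [hx]
              rw [div_le_one (by linarith : (0:ℝ) < N)]
              have : 2 * (m:ℝ) ≤ 2 * (N + 1) := by exact_mod_cast (by omega : 2 * m ≤ 2 * (N+1))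
              linarith
          by_cases hxδ : x m < δ
          · have hF1 : |F (x m) - F 0| ≤ η := by
              apply hδ
              rw [sub_zero, abs_of_nonneg hx01.1]
              exact hxδ
            have h2 : (0:ℝ) ≤ (2 * B / δ ^ 2) * (w m * (x m) ^ 2) := by positivity
            nlinarith [mul_le_mul_of_nonneg_left hF1 hw_pos]
          · push_neg at hxδ
            have hF1 : |F (x m) - F 0| ≤ 2 * B := by
              have h1 : |F (x m)| ≤ B := hB _ ⟨hx01.1, hx01.2⟩
              have h2 : |F 0| ≤ B := hB 0 ⟨le_refl 0, zero_le_one⟩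
              calc |F (x m) - F 0| ≤ |F (x m)| + |F 0| := abs_sub _ _
                _ ≤ 2 * B := by linarith
            have hδx : δ ^ 2 ≤ (x m) ^ 2 := by nlinarith
            have key : w m * (2 * B) ≤ (2 * B / δ ^ 2) * (w m * (x m) ^ 2) := by
              have h2 : w m * (2 * B) * δ ^ 2 ≤ 2 * B * (w m * (x m) ^ 2) := by
                nlinarith [mul_nonneg (mul_nonneg hB0 hw_pos) (sub_nonneg.mpr hδx)]
              have h3 : 2 * B / δ ^ 2 * (w m * (x m) ^ 2)
                  = 2 * B * (w m * (x m) ^ 2) / δ ^ 2 := by ring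
              rw [h3, le_div_iff₀ (by positivity : (0:ℝ) < δ ^ 2)]
              exact h2
            nlinarith [mul_le_mul_of_nonneg_left hF1 hw_pos, mul_nonneg hη hw_pos, key]
        · have hz : w m = 0 := by simp only [hw]; rw [if_neg h]; simp
          rw [hz]
          simp only [zero_mul, mul_zero, add_zero]
          positivity
    _ ≤ η + 24 * B / (δ ^ 2 * N) := by
        rw [Finset.sum_add_distrib, ← Finset.mul_sum, ← Finset.mul_sum, w_sum, mul_one]
        have moment : ∑ m ∈ Finset.range (N + 2), w m * (x m) ^ 2 ≤ 12 / N := by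
          have step1 : ∀ m ∈ Finset.range (N + 2), w m * (x m) ^ 2
              ≤ ((2 * m : ℝ) - (N + 1)) ^ 4 * ((N + 1).choose m : ℝ)
                / (((N + 1) * 2 ^ N) * N ^ 2) := by
            intro m hm
            simp only [Finset.mem_range] at hm
            by_cases h : N + 1 < 2 * m
            · simp only [hw, hx]
              simp only [if_pos h]
              set u : ℝ := (2 * m : ℝ) - (N + 1) with hu
              have hu1 : 1 ≤ u := by
                have : (N:ℝ) + 2 ≤ 2 * m := by exact_mod_cast (by omega : N + 2 ≤ 2 * m)
                rw [hu]; linarith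
              have hxu : ((2 * m : ℝ) - (N + 2)) = u - 1 := by rw [hu]; ring
              rw [hxu]
              rw [div_pow, div_mul_div_comm]
              apply div_le_div_of_nonneg_right _ (by positivity)
              have hC : (0:ℝ) ≤ ((N + 1).choose m : ℝ) := Nat.cast_nonneg _
              nlinarith [mul_nonneg (mul_nonneg (sq_nonneg u) hC)
                (by linarith : (0:ℝ) ≤ 2 * u - 1), hC, hu1]
            · simp only [hw, hx]
              simp only [if_neg h]
              rw [zero_div, zero_mul]
              positivity
          calc ∑ m ∈ Finset.range (N + 2), w m * (x m) ^ 2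
              ≤ ∑ m ∈ Finset.range (N + 2),
                  ((2 * m : ℝ) - (N + 1)) ^ 4 * ((N + 1).choose m : ℝ)
                    / (((N + 1) * 2 ^ N) * N ^ 2) := Finset.sum_le_sum step1
            _ = ((3 * ((N:ℝ)+1) ^ 2 - 2 * ((N:ℝ)+1)) * 2 ^ (N + 1))
                  / (((N + 1) * 2 ^ N) * N ^ 2) := by
                rw [← Finset.sum_div]
                congr 1
                have h := sum_quad (N + 1)
                push_cast at h
                exact h
            _ ≤ 12 / N := by
                rw [div_le_div_iff₀ (by positivity) (by linarith)]
                have : (2:ℝ) ^ (N + 1) = 2 * 2 ^ N := by ring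
                rw [this]
                have hp : (0:ℝ) < 2 ^ N := by positivity
                have hpoly : (3 * ((N:ℝ) + 1) ^ 2 - 2 * ((N:ℝ) + 1)) * 2 * N
                    ≤ 12 * (((N:ℝ) + 1) * N ^ 2) := by nlinarith [hN1]
                nlinarith [mul_le_mul_of_nonneg_right hpoly hp.le, hp]
        have : (2 * B / δ ^ 2) * ∑ m ∈ Finset.range (N + 2), w m * (x m) ^ 2
            ≤ (2 * B / δ ^ 2) * (12 / N) := by
          apply mul_le_mul_of_nonneg_left moment (by positivity)
        have heq : (2 * B / δ ^ 2) * (12 / N) = 24 * B / (δ ^ 2 * N) := by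
          field_simp
          ring
        linarith


/-- The probability measures `ν_N` converge weakly to the Dirac mass at `0`:
for every continuous `F`, `∫ F dν_N → F 0`.  Written via `k = 2J`. -/
theorem nu_N_tendsto_dirac (F : ℝ → ℝ) (hF : Continuous F) :
    Filter.Tendsto
      (fun N : ℕ =>
        (∑ k ∈ Finset.range (N + 1),
          if k % 2 = N % 2 then
            ((k + 1 : ℝ)) ^ 2 / (N + 1) * (Nat.choose (N + 1) ((N + k) / 2 + 1) : ℝ)
              * F ((k : ℝ) / N)
          else 0) / 2 ^ N)
      Filter.atTop (nhds (F 0)) := by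
  obtain ⟨B, hB⟩ := isCompact_Icc.exists_bound_of_continuousOn
    (hF.continuousOn (s := Set.Icc (0:ℝ) 1))
  have hB' : ∀ x ∈ Set.Icc (0:ℝ) 1, |F x| ≤ B := by
    intro x hx
    rw [← Real.norm_eq_abs]
    exact hB x hx
  have hB0 : 0 ≤ B := le_trans (abs_nonneg _) (hB' 0 ⟨le_refl 0, zero_le_one⟩)
  rw [Metric.tendsto_atTop]
  intro ε hε
  obtain ⟨δ, hδ0, hδ⟩ := Metric.continuous_iff.mp hF 0 (ε/4) (by linarith)
  have hδ' : ∀ x : ℝ, |x - 0| < δ → |F x - F 0| ≤ ε/4 := by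
    intro x hx
    have := hδ x (by simpa [Real.dist_eq] using hx)
    rw [Real.dist_eq] at this
    linarith
  have htend : Filter.Tendsto (fun N : ℕ => 24 * B / (δ ^ 2 * N)) Filter.atTop (nhds 0) := by
    apply Filter.Tendsto.div_atTop (tendsto_const_nhds (x := 24 * B))
    exact Filter.Tendsto.const_mul_atTop (by positivity) tendsto_natCast_atTop_atTop
  have h1 : ∀ᶠ N : ℕ in Filter.atTop, 24 * B / (δ ^ 2 * N) < ε/4 :=
    htend.eventually (gt_mem_nhds (by linarith : (0:ℝ) < ε/4))
  obtain ⟨N₀, hN₀⟩ := Filter.eventually_atTop.mp (h1.and (Filter.eventually_ge_atTop 1))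
  refine ⟨N₀, fun N hN => ?_⟩
  obtain ⟨hsmall, hN1⟩ := hN₀ N hN
  rw [Real.dist_eq]
  have := main_est F N hN1 B δ (ε/4) hB0 hB' hδ0 (by linarith) hδ'
  calc |(∑ k ∈ Finset.range (N + 1),
          if k % 2 = N % 2 then
            ((k + 1 : ℝ)) ^ 2 / (N + 1) * (Nat.choose (N + 1) ((N + k) / 2 + 1) : ℝ)
              * F ((k : ℝ) / N)
          else 0) / 2 ^ N - F 0|
      ≤ ε/4 + 24 * B / (δ ^ 2 * N) := this
    _ < ε := by linarith
end

section
/- Let {A_n} be a sequence of matrices with A_n of size d_n → ∞, and suppose A_n = R_n + N_n where rank(R_n)/d_n → 0 and the spectral norm ‖N_n‖ → 0. Then {A_n} is zero-distributed: for every continuous compactly supported F: ℝ → ℂ, (1/d_n)·Σ_{i=1}^{d_n} F(σ_i(A_n)) → F(0), where σ_i(A_n) are the singular values of A_n. -/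
open Finset Filter

/-- The singular values of a square complex matrix: square roots of the
eigenvalues of `Aᴴ * A`. -/
noncomputable def singularValues {n : ℕ} (A : Matrix (Fin n) (Fin n) ℂ) : Fin n → ℝ :=
  fun i => Real.sqrt ((Matrix.isHermitian_conjTranspose_mul_self A).eigenvalues i)

/-- The spectral (operator) norm of a matrix, as the `L²` operator norm of the
associated Euclidean linear map. -/
noncomputable def specNorm {n : ℕ} (A : Matrix (Fin n) (Fin n) ℂ) : ℝ :=
  ‖Matrix.toEuclideanCLM (𝕜 := ℂ) A‖

open Matrix
local notation "⟪" x ", " y "⟫" => @inner ℂ _ _ x y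

lemma conj_mul_self' (z : ℂ) : (starRingEnd ℂ) z * z = ((‖z‖ ^ 2 : ℝ) : ℂ) := by
  rw [mul_comm, Complex.mul_conj]
  norm_cast
  rw [Complex.normSq_eq_norm_sq]

lemma key_card {n : ℕ} (A R N : Matrix (Fin n) (Fin n) ℂ) (hA : A = R + N)
    {δ : ℝ} (hδ : 0 ≤ δ) (hN : specNorm N ≤ δ) :
    (Finset.univ.filter fun i =>
        δ ^ 2 < (Matrix.isHermitian_conjTranspose_mul_self A).eigenvalues i).card ≤ R.rank := by
  classical
  set hB := Matrix.isHermitian_conjTranspose_mul_self A with hhB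
  set b := hB.eigenvectorBasis with hb
  set μ := hB.eigenvalues with hμ
  set S := (Finset.univ.filter fun i => δ ^ 2 < μ i) with hS
  -- rank as finrank of range of toEuclideanLin
  have hrank : R.rank = Module.finrank ℂ
      (LinearMap.range (Matrix.toEuclideanLin (𝕜 := ℂ) R)) := by
    rw [Matrix.toEuclideanLin_eq_toLin]
    exact Matrix.rank_eq_finrank_range_toLin R _ _
  set W := LinearMap.range (Matrix.toEuclideanLin (𝕜 := ℂ) R) with hW
  -- the family
  have horth : Orthonormal ℂ (fun i : ↥S => b i) :=
    b.orthonormal.comp _ Subtype.val_injective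
  have hTB : ∀ i : Fin n, Matrix.toEuclideanCLM (𝕜 := ℂ) (Aᴴ * A) (b i)
      = ((μ i : ℂ)) • b i := by
    intro i
    have h := hB.mulVec_eigenvectorBasis i
    apply WithLp.ofLp_injective 2
    rw [Matrix.ofLp_toEuclideanCLM]
    show (Aᴴ * A) *ᵥ _ = _
    rw [h, RCLike.real_smul_eq_coe_smul (K := ℂ)]
    rfl
  have indep' : LinearIndependent ℂ
      (fun i : ↥S => Matrix.toEuclideanLin (𝕜 := ℂ) R (b i)) := by
    rw [linearIndependent_iff']
    intro s g hsum j hj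
    by_contra hg
    set x : EuclideanSpace ℂ (Fin n) := ∑ i ∈ s, g i • b i with hx
    set TA := Matrix.toEuclideanCLM (𝕜 := ℂ) A with hTA
    have hRx : Matrix.toEuclideanLin (𝕜 := ℂ) R x = 0 := by
      rw [hx, map_sum]
      simpa [_root_.map_smul] using hsum
    -- TA x = TN x
    have hsplit : TA x = Matrix.toEuclideanCLM (𝕜 := ℂ) N x := by
      rw [hTA, hA, map_add, ContinuousLinearMap.add_apply]
      have : Matrix.toEuclideanCLM (𝕜 := ℂ) R x = 0 := by
        have := Matrix.coe_toEuclideanCLM_eq_toEuclideanLin (𝕜 := ℂ) (A := R)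
        calc Matrix.toEuclideanCLM (𝕜 := ℂ) R x
            = (Matrix.toEuclideanCLM (𝕜 := ℂ) R : _ →ₗ[ℂ] _) x := rfl
          _ = Matrix.toEuclideanLin (𝕜 := ℂ) R x := by rw [this]
          _ = 0 := hRx
      rw [this, zero_add]
    have hAle : ‖TA x‖ ≤ δ * ‖x‖ := by
      rw [hsplit]
      calc ‖Matrix.toEuclideanCLM (𝕜 := ℂ) N x‖
          ≤ specNorm N * ‖x‖ := (Matrix.toEuclideanCLM (𝕜 := ℂ) N).le_opNorm x
        _ ≤ δ * ‖x‖ := by gcongr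
    -- inner product computation
    have hBx : Matrix.toEuclideanCLM (𝕜 := ℂ) (Aᴴ * A) x
        = ∑ i ∈ s, (g i * (μ i : ℂ)) • b i := by
      rw [hx, map_sum]
      refine Finset.sum_congr rfl fun i _ => ?_
      rw [_root_.map_smul, hTB, smul_smul]
    have hadj : Matrix.toEuclideanCLM (𝕜 := ℂ) (Aᴴ * A) = star TA * TA := by
      rw [hTA, ← map_star, ← _root_.map_mul, Matrix.star_eq_conjTranspose]
    have hinner : ⟪TA x, TA x⟫ = ∑ i ∈ s, (starRingEnd ℂ) (g i) * (g i * (μ i : ℂ)) := by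
      have h1 : ⟪TA x, TA x⟫ = ⟪x, Matrix.toEuclideanCLM (𝕜 := ℂ) (Aᴴ * A) x⟫ := by
        rw [hadj, ContinuousLinearMap.mul_apply, ContinuousLinearMap.star_eq_adjoint,
          ContinuousLinearMap.adjoint_inner_right]
      rw [h1, hBx, hx]
      exact horth.inner_sum g (fun i => g i * (μ i : ℂ)) s
    have hxx : ⟪x, x⟫ = ∑ i ∈ s, (starRingEnd ℂ) (g i) * g i := by
      rw [hx]; exact horth.inner_sum g g s
    -- real versions
    have hAnorm : ‖TA x‖ ^ 2 = ∑ i ∈ s, ‖g i‖ ^ 2 * μ i := by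
      have hsum1 : ∑ i ∈ s, (starRingEnd ℂ) (g i) * (g i * (μ i : ℂ))
          = ((∑ i ∈ s, ‖g i‖ ^ 2 * μ i : ℝ) : ℂ) := by
        push_cast
        refine Finset.sum_congr rfl fun i _ => ?_
        rw [← mul_assoc, conj_mul_self']
        push_cast
        ring
      have h := hinner
      rw [hsum1] at h
      have h2 := inner_self_eq_norm_sq (𝕜 := ℂ) (TA x)
      rw [h] at h2
      simpa only [RCLike.re_to_complex, Complex.ofReal_re] using h2.symm
    have hxnorm : ‖x‖ ^ 2 = ∑ i ∈ s, ‖g i‖ ^ 2 := by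
      have hsum1 : ∑ i ∈ s, (starRingEnd ℂ) (g i) * g i
          = ((∑ i ∈ s, ‖g i‖ ^ 2 : ℝ) : ℂ) := by
        push_cast
        refine Finset.sum_congr rfl fun i _ => ?_
        rw [conj_mul_self']
        push_cast
        ring
      have h := hxx
      rw [hsum1] at h
      have h2 := inner_self_eq_norm_sq (𝕜 := ℂ) x
      rw [h] at h2
      simpa only [RCLike.re_to_complex, Complex.ofReal_re] using h2.symm
    -- strict inequality
    have hstrict : δ ^ 2 * ‖x‖ ^ 2 < ‖TA x‖ ^ 2 := by
      rw [hAnorm, hxnorm, Finset.mul_sum]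
      apply Finset.sum_lt_sum
      · intro i _
        have hμi : δ ^ 2 < μ i := (Finset.mem_filter.mp i.2).2
        calc δ ^ 2 * ‖g i‖ ^ 2 ≤ μ i * ‖g i‖ ^ 2 := by
              apply mul_le_mul_of_nonneg_right (le_of_lt hμi) (by positivity)
          _ = ‖g i‖ ^ 2 * μ i := mul_comm _ _
      · exact ⟨j, hj, by
          have hμj : δ ^ 2 < μ j := (Finset.mem_filter.mp j.2).2
          have hg0 : 0 < ‖g j‖ := norm_pos_iff.mpr hg
          have hgj : 0 < ‖g j‖ ^ 2 := by positivity
          calc δ ^ 2 * ‖g j‖ ^ 2 < μ j * ‖g j‖ ^ 2 := by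
                apply mul_lt_mul_of_pos_right hμj hgj
            _ = ‖g j‖ ^ 2 * μ j := mul_comm _ _⟩
    have hAle2 : ‖TA x‖ ^ 2 ≤ δ ^ 2 * ‖x‖ ^ 2 := by
      have h0 : (0:ℝ) ≤ ‖TA x‖ := norm_nonneg _
      nlinarith [norm_nonneg x, norm_nonneg (TA x)]
    linarith
  have indep : LinearIndependent ℂ (fun i : ↥S =>
      (⟨Matrix.toEuclideanLin (𝕜 := ℂ) R (b i), LinearMap.mem_range_self _ _⟩ : W)) := by
    apply LinearIndependent.of_comp W.subtype
    exact indep'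
  have hcard := indep.fintype_card_le_finrank
  rwa [Fintype.card_coe, ← hrank] at hcard


/-- If `Aₙ = Rₙ + Nₙ` with `rank Rₙ / dₙ → 0` and `‖Nₙ‖ → 0` (spectral norm), then
`{Aₙ}` is zero-distributed. -/
theorem zero_distributed_of_rank_plus_small_norm
    (d : ℕ → ℕ) (hd : Tendsto d atTop atTop)
    (A R Nn : ∀ n : ℕ, Matrix (Fin (d n)) (Fin (d n)) ℂ)
    (hsplit : ∀ n, A n = R n + Nn n)
    (hrank : Tendsto (fun n => ((R n).rank : ℝ) / (d n : ℝ)) atTop (nhds 0))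
    (hnorm : Tendsto (fun n => specNorm (Nn n)) atTop (nhds 0)) :
    ∀ F : ℝ → ℂ, Continuous F → HasCompactSupport F →
      Tendsto (fun n => (∑ i : Fin (d n), F (singularValues (A n) i)) / (d n : ℂ))
        atTop (nhds (F 0)) := by
  intro F hF hFc
  obtain ⟨C, hC⟩ := hFc.exists_bound_of_continuous hF
  have hC0 : 0 ≤ C := le_trans (norm_nonneg _) (hC 0)
  rw [Metric.tendsto_nhds]
  intro ε hε
  obtain ⟨δ, hδpos, hδ⟩ := Metric.continuousAt_iff.mp (hF.continuousAt (x := 0)) (ε/4) (by positivity)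
  have hN' : ∀ᶠ n in atTop, specNorm (Nn n) ≤ δ/2 :=
    hnorm.eventually (eventually_le_nhds (by positivity))
  have hr' : ∀ᶠ n in atTop, ((R n).rank : ℝ) / (d n : ℝ) < ε/(2*(2*C+1)) :=
    hrank.eventually (eventually_lt_nhds (by positivity))
  have hd' : ∀ᶠ n in atTop, 1 ≤ d n := hd.eventually_ge_atTop 1
  filter_upwards [hN', hr', hd'] with n hNn hrn hdn
  classical
  have hm0 : (0:ℝ) < (d n : ℝ) := by exact_mod_cast hdn
  set σ := singularValues (A n) with hσ
  set μ := (Matrix.isHermitian_conjTranspose_mul_self (A n)).eigenvalues with hμ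
  set S := (Finset.univ.filter fun i => (δ/2)^2 < μ i) with hS
  have hcard : S.card ≤ (R n).rank :=
    key_card (A n) (R n) (Nn n) (hsplit n) (by positivity) hNn
  -- rewrite the difference as a single sum
  have hfsub : (∑ i : Fin (d n), F (σ i)) / ((d n : ℕ) : ℂ) - F 0
      = (∑ i : Fin (d n), (F (σ i) - F 0)) / ((d n : ℕ) : ℂ) := by
    have hne : ((d n : ℕ) : ℂ) ≠ 0 := Nat.cast_ne_zero.mpr (by omega)
    rw [Finset.sum_sub_distrib, sub_div, Finset.sum_const, Finset.card_univ,
      Fintype.card_fin, nsmul_eq_mul]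
    congr 1
    exact (mul_div_cancel_left₀ _ hne).symm
  -- pointwise bounds
  have hsmall : ∀ i, i ∉ S → ‖F (σ i) - F 0‖ ≤ ε/4 := by
    intro i hi
    have hμi : μ i ≤ (δ/2)^2 := by
      by_contra h
      exact hi (Finset.mem_filter.mpr ⟨Finset.mem_univ _, lt_of_not_ge h⟩)
    have hσi : σ i ≤ δ/2 := by
      rw [hσ, singularValues]
      calc Real.sqrt (μ i) ≤ Real.sqrt ((δ/2)^2) := Real.sqrt_le_sqrt hμi
        _ = δ/2 := Real.sqrt_sq (by positivity)
    have h0 : 0 ≤ σ i := by rw [hσ]; exact Real.sqrt_nonneg _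
    have hdist : dist (σ i) 0 < δ := by
      rw [Real.dist_eq, sub_zero, abs_of_nonneg h0]
      linarith
    have := hδ hdist
    rw [dist_eq_norm] at this
    linarith
  have hbig : ∀ i, ‖F (σ i) - F 0‖ ≤ 2*C+1 := by
    intro i
    calc ‖F (σ i) - F 0‖ ≤ ‖F (σ i)‖ + ‖F 0‖ := norm_sub_le _ _
      _ ≤ C + C := add_le_add (hC _) (hC _)
      _ ≤ 2*C+1 := by linarith
  -- the sum estimate
  have hsum : ∑ i : Fin (d n), ‖F (σ i) - F 0‖
      ≤ (d n : ℝ) * (ε/4) + (S.card : ℝ) * (2*C+1) := by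
    rw [← Finset.sum_filter_add_sum_filter_not Finset.univ (fun i => (δ/2)^2 < μ i)]
    have h1 : ∑ i ∈ S, ‖F (σ i) - F 0‖ ≤ (S.card : ℝ) * (2*C+1) := by
      calc ∑ i ∈ S, ‖F (σ i) - F 0‖ ≤ ∑ i ∈ S, (2*C+1) :=
            Finset.sum_le_sum fun i _ => hbig i
        _ = (S.card : ℝ) * (2*C+1) := by rw [Finset.sum_const, nsmul_eq_mul]
    have h2 : ∑ i ∈ (Finset.univ.filter fun i => ¬ (δ/2)^2 < μ i), ‖F (σ i) - F 0‖
        ≤ (d n : ℝ) * (ε/4) := by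
      calc ∑ i ∈ (Finset.univ.filter fun i => ¬ (δ/2)^2 < μ i), ‖F (σ i) - F 0‖
          ≤ ∑ _i ∈ (Finset.univ.filter fun i => ¬ (δ/2)^2 < μ i), (ε/4) :=
            Finset.sum_le_sum fun i hi =>
              hsmall i (fun hmem =>
                (Finset.mem_filter.mp hi).2 (Finset.mem_filter.mp hmem).2)
        _ = ((Finset.univ.filter fun i => ¬ (δ/2)^2 < μ i).card : ℝ) * (ε/4) := by
            rw [Finset.sum_const, nsmul_eq_mul]
        _ ≤ (d n : ℝ) * (ε/4) := by
            apply mul_le_mul_of_nonneg_right _ (by positivity)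
            have := Finset.card_filter_le Finset.univ (fun i => ¬ (δ/2)^2 < μ i)
            rw [Finset.card_univ, Fintype.card_fin] at this
            exact_mod_cast this
    linarith
  -- conclude
  have hrankR : ((R n).rank : ℝ) < (d n : ℝ) * (ε/(2*(2*C+1))) := by
    rw [div_lt_iff₀ hm0] at hrn
    linarith
  have hcardR : (S.card : ℝ) * (2*C+1) < (d n : ℝ) * (ε/2) := by
    have h1 : (S.card : ℝ) ≤ ((R n).rank : ℝ) := by exact_mod_cast hcard
    have h2 : (S.card : ℝ) * (2*C+1) ≤ ((R n).rank : ℝ) * (2*C+1) := by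
      apply mul_le_mul_of_nonneg_right h1 (by linarith)
    have h3 : ((R n).rank : ℝ) * (2*C+1) < ((d n : ℝ) * (ε/(2*(2*C+1)))) * (2*C+1) := by
      apply mul_lt_mul_of_pos_right hrankR (by linarith)
    have h4 : ((d n : ℝ) * (ε/(2*(2*C+1)))) * (2*C+1) = (d n : ℝ) * (ε/2) := by
      field_simp
    linarith
  rw [dist_eq_norm, hfsub]
  rw [norm_div]
  have hnormm : ‖((d n : ℕ) : ℂ)‖ = (d n : ℝ) := by
    simp
  rw [hnormm, div_lt_iff₀ hm0]
  calc ‖∑ i : Fin (d n), (F (σ i) - F 0)‖ ≤ ∑ i : Fin (d n), ‖F (σ i) - F 0‖ :=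
        norm_sum_le _ _
    _ ≤ (d n : ℝ) * (ε/4) + (S.card : ℝ) * (2*C+1) := hsum
    _ < (d n : ℝ) * (ε/4) + (d n : ℝ) * (ε/2) := by linarith
    _ ≤ ε * (d n : ℝ) := by nlinarith
end

section
/- Let {A_n} be a sequence of matrices with A_n of size d_n → ∞. If there exists p ∈ [1,∞) such that ‖A_n‖_p / d_n^{1/p} → 0, where ‖·‖_p is the Schatten p-norm, then {A_n} is zero-distributed: for every continuous compactly supported F: ℝ → ℝ, (1/d_n)Σ_i F(σ_i(A_n)) → F(0). -/
open Finset Filter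

/-- The Schatten `p`-norm of a matrix: the `ℓ^p` norm of the vector of its
singular values. -/
noncomputable def schattenNorm {n : ℕ} (p : ℝ) (A : Matrix (Fin n) (Fin n) ℂ) : ℝ :=
  (∑ i : Fin n, singularValues A i ^ p) ^ (1 / p)

/-- If `‖Aₙ‖_p / dₙ^{1/p} → 0` for some `p ∈ [1, ∞)`, then `{Aₙ}` is
zero-distributed. -/
theorem zero_distributed_of_schatten_norm
    (d : ℕ → ℕ) (hd : Tendsto d atTop atTop)
    (A : ∀ n : ℕ, Matrix (Fin (d n)) (Fin (d n)) ℂ)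
    (p : ℝ) (hp : 1 ≤ p)
    (hnorm : Tendsto (fun n => schattenNorm p (A n) / (d n : ℝ) ^ (1 / p))
      atTop (nhds 0)) :
    ∀ F : ℝ → ℝ, Continuous F → HasCompactSupport F →
      Tendsto (fun n => (∑ i : Fin (d n), F (singularValues (A n) i)) / (d n : ℝ))
        atTop (nhds (F 0)) := by
  intro F hF hFc
  have hp0 : (0:ℝ) < p := lt_of_lt_of_le one_pos hp
  have hpne : p ≠ 0 := ne_of_gt hp0
  -- singular values are nonnegative
  have hsv : ∀ n i, 0 ≤ singularValues (A n) i := fun n i => Real.sqrt_nonneg _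
  -- global bound on |F|
  obtain ⟨C, hC⟩ := hFc.exists_bound_of_continuousOn hF.continuousOn
  set M : ℝ := max C 0 with hM
  have hMnn : 0 ≤ M := le_max_right _ _
  have hMb : ∀ x, |F x| ≤ M := by
    intro x
    by_cases hx : x ∈ tsupport F
    · exact le_trans (hC x hx) (le_max_left _ _)
    · simp [image_eq_zero_of_notMem_tsupport hx, hMnn]
  -- sum of p-th powers
  set S : ℕ → ℝ := fun n => ∑ i : Fin (d n), singularValues (A n) i ^ p with hS
  have hSnn : ∀ n, 0 ≤ S n := fun n => Finset.sum_nonneg fun i _ =>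
    Real.rpow_nonneg (hsv n i) p
  have hSch : ∀ n, schattenNorm p (A n) = S n ^ (1/p) := fun n => rfl
  -- g n = S n / d n tends to 0
  have hg : Tendsto (fun n => S n / (d n : ℝ)) atTop (nhds 0) := by
    have h1 : Tendsto (fun n => (schattenNorm p (A n) / (d n : ℝ) ^ (1/p)) ^ p)
        atTop (nhds 0) := by
      have := hnorm.rpow_const (p := p) (Or.inr (le_of_lt hp0))
      simpa [Real.zero_rpow hpne] using this
    apply h1.congr'
    filter_upwards [hd.eventually (eventually_ge_atTop 1)] with n hn
    have hdpos : (0:ℝ) < (d n : ℝ) := by exact_mod_cast hn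
    rw [hSch, Real.div_rpow (Real.rpow_nonneg (hSnn n) _) (Real.rpow_nonneg hdpos.le _)]
    rw [← Real.rpow_mul (hSnn n), ← Real.rpow_mul hdpos.le]
    rw [one_div_mul_cancel hpne, Real.rpow_one, Real.rpow_one]
  rw [Metric.tendsto_atTop]
  intro ε hε
  -- continuity of F at 0 gives δ
  obtain ⟨δ, hδ0, hδ⟩ := Metric.continuous_iff.mp hF 0 (ε/2) (by linarith)
  have hδp : (0:ℝ) < δ ^ p := Real.rpow_pos_of_pos hδ0 p
  set K : ℝ := 2 * (M + 1) / δ ^ p with hK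
  have hKpos : 0 < K := by positivity
  -- pointwise bound
  have hpt : ∀ n i, |F (singularValues (A n) i) - F 0| ≤ ε/2 + K * singularValues (A n) i ^ p := by
    intro n i
    set σ := singularValues (A n) i with hσ
    have hσnn : 0 ≤ σ := hsv n i
    by_cases hlt : σ < δ
    · have := hδ σ (by simpa [Real.dist_eq, abs_of_nonneg hσnn] using hlt)
      rw [Real.dist_eq] at this
      have : |F σ - F 0| ≤ ε/2 := this.le
      nlinarith [Real.rpow_nonneg hσnn p, hKpos.le,
        mul_nonneg hKpos.le (Real.rpow_nonneg hσnn p)]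
    · push_neg at hlt
      have h1 : δ ^ p ≤ σ ^ p := Real.rpow_le_rpow hδ0.le hlt hp0.le
      have h2 : 2 * (M + 1) ≤ K * σ ^ p := by
        have : K * δ ^ p ≤ K * σ ^ p := by
          exact mul_le_mul_of_nonneg_left h1 hKpos.le
        rwa [hK, div_mul_cancel₀ _ (ne_of_gt hδp)] at this
      have h3 : |F σ - F 0| ≤ 2 * M := by
        calc |F σ - F 0| ≤ |F σ| + |F 0| := abs_sub _ _
          _ ≤ M + M := add_le_add (hMb σ) (hMb 0)
          _ = 2 * M := by ring
      linarith
  -- choose N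
  obtain ⟨N₁, hN₁⟩ := (Metric.tendsto_atTop.mp hg) (ε / (2 * K)) (by positivity)
  obtain ⟨N₂, hN₂⟩ := eventually_atTop.mp (hd.eventually (eventually_ge_atTop 1))
  refine ⟨max N₁ N₂, fun n hn => ?_⟩
  have hn₁ := hN₁ n (le_trans (le_max_left _ _) hn)
  have hn₂ := hN₂ n (le_trans (le_max_right _ _) hn)
  have hdpos : (0:ℝ) < (d n : ℝ) := by exact_mod_cast hn₂
  rw [Real.dist_eq]
  have key : (∑ i : Fin (d n), F (singularValues (A n) i)) / (d n : ℝ) - F 0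
      = (∑ i : Fin (d n), (F (singularValues (A n) i) - F 0)) / (d n : ℝ) := by
    rw [Finset.sum_sub_distrib, Finset.sum_const]
    simp only [Finset.card_univ, Fintype.card_fin, nsmul_eq_mul]
    field_simp
  rw [key, abs_div, abs_of_pos hdpos]
  have hbound : |∑ i : Fin (d n), (F (singularValues (A n) i) - F 0)|
      ≤ (d n : ℝ) * (ε/2) + K * S n := by
    calc |∑ i : Fin (d n), (F (singularValues (A n) i) - F 0)|
        ≤ ∑ i : Fin (d n), |F (singularValues (A n) i) - F 0| :=
          Finset.abs_sum_le_sum_abs _ _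
      _ ≤ ∑ i : Fin (d n), (ε/2 + K * singularValues (A n) i ^ p) :=
          Finset.sum_le_sum fun i _ => hpt n i
      _ = (d n : ℝ) * (ε/2) + K * S n := by
          rw [Finset.sum_add_distrib, Finset.sum_const, ← Finset.mul_sum]
          simp [mul_comm]
          exact Or.inl rfl
  have hgn : S n / (d n : ℝ) < ε / (2 * K) := by
    have := hn₁
    rw [Real.dist_eq, sub_zero, abs_of_nonneg (div_nonneg (hSnn n) hdpos.le)] at this
    exact this
  calc |∑ i : Fin (d n), (F (singularValues (A n) i) - F 0)| / (d n : ℝ)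
      ≤ ((d n : ℝ) * (ε/2) + K * S n) / (d n : ℝ) := by gcongr
    _ = ε/2 + K * (S n / (d n : ℝ)) := by field_simp
    _ < ε/2 + K * (ε / (2 * K)) := by
        have := mul_lt_mul_of_pos_left hgn hKpos
        linarith
    _ = ε := by field_simp; ring
end
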